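/- arXiv:1110.6125 — 6 statements merged into one kernel-verified Lean document; each statement's English description precedes it below -/
import Mathlib

section
/- Suppose ψ : ℝ → ℝ is differentiable at x0 with Dψ(x0) = ω > 0. Fix constants R1 > 1 and ε ∈ (0,1). Then there exist a constant C2 > 0 depending only on ω and R1, and δ > 0, such that for all points z1 < z2 < z3 < z4 in (x0 - δ, x0 + δ) satisfying (a) R1^{-1}(z3-z2)√ε ≤ z2-z1 ≤ R1(z3-z2)ε^{1/4}, (b) R1^{-1}(z3-z2) ≤ z4-z3 ≤ R1(z3-z2), and (c) max_i |x0 - z_i| ≤ R1(z3-z2), the following holds: ((z1,z2)-ratio) (ψ(z2)-ψ(z1))/(ψ(z3)-ψ(z2)) lies between ((z2-z1)/(z3-z2))(1 - C2√ε) and ((z2-z1)/(z3-z2))(1 + C2√ε). -/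
theorem ratio_aux (ω a L s N D : ℝ) (hω : 0 < ω) (ha : 0 < a) (hL : 0 < L)
    (hs0 : 0 < s) (hs1 : s < 1)
    (hN1 : ω * a - ω * a * s / 4 ≤ N) (hN2 : N ≤ ω * a + ω * a * s / 4)
    (hD1 : ω * L - ω * L * s / 4 ≤ D) (hD2 : D ≤ ω * L + ω * L * s / 4) :
    (a / L) * (1 - 1 * s) ≤ N / D ∧ N / D ≤ (a / L) * (1 + 1 * s) := by
  have hωL : 0 < ω * L := mul_pos hω hL
  have hωa : 0 < ω * a := mul_pos hω ha
  have hDpos : 0 < D := by nlinarith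
  constructor
  · rw [div_mul_eq_mul_div, div_le_div_iff₀ hL hDpos]
    nlinarith [mul_pos hωa hL, mul_pos (mul_pos hωa hL) hs0,
      mul_pos (mul_pos hωa hL) (mul_pos hs0 hs0),
      mul_nonneg (mul_nonneg ha.le (sub_nonneg.2 hs1.le)) (sub_nonneg.2 hD2)]
  · rw [div_mul_eq_mul_div, div_le_div_iff₀ hDpos hL]
    nlinarith [mul_pos hωa hL, mul_pos (mul_pos hωa hL) hs0,
      mul_pos (mul_pos hωa hL) (mul_pos hs0 hs0),
      mul_nonneg (mul_nonneg ha.le hs0.le) (sub_nonneg.2 hD1)]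

theorem ratio_estimate_at_differentiability_point
    (ψ : ℝ → ℝ) (x0 ω : ℝ) (hω : 0 < ω)
    (hdiff : HasDerivAt ψ ω x0)
    (R1 : ℝ) (hR1 : 1 < R1) :
    ∃ C2 > 0, ∀ ε ∈ Set.Ioo (0 : ℝ) 1, ∃ δ > 0,
      ∀ z1 z2 z3 z4 : ℝ,
        z1 ∈ Set.Ioo (x0 - δ) (x0 + δ) → z2 ∈ Set.Ioo (x0 - δ) (x0 + δ) →
        z3 ∈ Set.Ioo (x0 - δ) (x0 + δ) → z4 ∈ Set.Ioo (x0 - δ) (x0 + δ) →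
        z1 < z2 → z2 < z3 → z3 < z4 →
        -- condition (a)
        R1⁻¹ * (z3 - z2) * Real.sqrt ε ≤ z2 - z1 →
        z2 - z1 ≤ R1 * (z3 - z2) * ε ^ ((1 : ℝ)/4) →
        -- condition (b)
        R1⁻¹ * (z3 - z2) ≤ z4 - z3 → z4 - z3 ≤ R1 * (z3 - z2) →
        -- condition (c)
        (∀ z ∈ ({z1, z2, z3, z4} : Set ℝ), |x0 - z| ≤ R1 * (z3 - z2)) →
        ((z2 - z1) / (z3 - z2)) * (1 - C2 * Real.sqrt ε)
            ≤ (ψ z2 - ψ z1) / (ψ z3 - ψ z2) ∧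
          (ψ z2 - ψ z1) / (ψ z3 - ψ z2)
            ≤ ((z2 - z1) / (z3 - z2)) * (1 + C2 * Real.sqrt ε) := by
  have hR0 : (0:ℝ) < R1 := lt_trans one_pos hR1
  refine ⟨1, one_pos, ?_⟩
  intro ε hε
  obtain ⟨hε0, hε1⟩ := hε
  set η : ℝ := ω * ε / (8 * R1 ^ 2) with hη_def
  have hη : 0 < η := by positivity
  have hbound := hdiff.isLittleO.bound hη
  rw [Metric.eventually_nhds_iff] at hbound
  obtain ⟨δ, hδ, hb⟩ := hbound
  refine ⟨δ, hδ, ?_⟩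
  intro z1 z2 z3 z4 h1 h2 h3 h4 h12 h23 h34 ha1 ha2 hb1 hb2 hc
  set s : ℝ := Real.sqrt ε with hs_def
  have hs0 : 0 < s := Real.sqrt_pos.mpr hε0
  have hs1 : s < 1 := by
    rw [hs_def, show (1:ℝ) = Real.sqrt 1 by simp]
    exact Real.sqrt_lt_sqrt hε0.le hε1
  have hse : s ^ 2 = ε := Real.sq_sqrt hε0.le
  have hεs : ε ≤ s := by nlinarith
  set L : ℝ := z3 - z2 with hL_def
  set a : ℝ := z2 - z1 with ha_def
  have hL : 0 < L := by simp [hL_def]; linarith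
  have ha : 0 < a := by simp [ha_def]; linarith
  have hLa : L * s ≤ R1 * a := by
    have := ha1
    rw [inv_mul_eq_div, div_mul_eq_mul_div, div_le_iff₀ hR0] at this
    linarith [this]
  -- pointwise estimates
  have key : ∀ z : ℝ, z ∈ Set.Ioo (x0 - δ) (x0 + δ) → |x0 - z| ≤ R1 * L →
      |ψ z - ψ x0 - (z - x0) * ω| ≤ η * (R1 * L) := by
    intro z hz hzc
    have hd : dist z x0 < δ := by
      rw [Real.dist_eq, abs_lt]
      constructor <;> [linarith [hz.1]; linarith [hz.2]]
    have := hb hd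
    simp only [smul_eq_mul, Real.norm_eq_abs] at this
    have h2 : |z - x0| ≤ R1 * L := by rwa [abs_sub_comm] at hzc
    calc |ψ z - ψ x0 - (z - x0) * ω| ≤ η * |z - x0| := this
      _ ≤ η * (R1 * L) := by nlinarith
  have k1 := key z1 h1 (hc z1 (by simp))
  have k2 := key z2 h2 (hc z2 (by simp))
  have k3 := key z3 h3 (hc z3 (by simp))
  set N : ℝ := ψ z2 - ψ z1 with hN_def
  set D : ℝ := ψ z3 - ψ z2 with hD_def
  have hE1 : |N - ω * a| ≤ 2 * η * R1 * L := by
    have : N - ω * a = (ψ z2 - ψ x0 - (z2 - x0) * ω) - (ψ z1 - ψ x0 - (z1 - x0) * ω) := by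
      simp [hN_def, ha_def]; ring
    rw [this]
    calc _ ≤ |ψ z2 - ψ x0 - (z2 - x0) * ω| + |ψ z1 - ψ x0 - (z1 - x0) * ω| := abs_sub _ _
      _ ≤ 2 * η * R1 * L := by linarith
  have hE2 : |D - ω * L| ≤ 2 * η * R1 * L := by
    have : D - ω * L = (ψ z3 - ψ x0 - (z3 - x0) * ω) - (ψ z2 - ψ x0 - (z2 - x0) * ω) := by
      simp [hD_def, hL_def]; ring
    rw [this]
    calc _ ≤ |ψ z3 - ψ x0 - (z3 - x0) * ω| + |ψ z2 - ψ x0 - (z2 - x0) * ω| := abs_sub _ _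
      _ ≤ 2 * η * R1 * L := by linarith
  rw [abs_le] at hE1 hE2
  -- key numeric bounds
  have hηval : 2 * η * R1 * L = ω * ε * L / (4 * R1) := by
    rw [hη_def]; field_simp; ring
  have hεeq : ε = s * s := by rw [← hse]; ring
  have hR4 : (0:ℝ) < 4 * R1 := by positivity
  have hmul : ω * s * (L * s) ≤ ω * s * (R1 * a) :=
    mul_le_mul_of_nonneg_left hLa (by positivity)
  have h : 2 * η * R1 * L ≤ ω * a * s / 4 := by
    rw [hηval, div_le_div_iff₀ hR4 (by norm_num : (0:ℝ) < 4), hεeq]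
    linarith only [hmul]
  have h2 : 2 * η * R1 * L ≤ ω * L * s / 4 := by
    rw [hηval, div_le_div_iff₀ hR4 (by norm_num : (0:ℝ) < 4), hεeq]
    have hss : s * s ≤ s * 1 := mul_le_mul_of_nonneg_left hs1.le hs0.le
    have t1 : (ω * L) * (s * s) ≤ (ω * L) * (s * 1) :=
      mul_le_mul_of_nonneg_left hss (by positivity)
    have t2 : ω * s * L * 4 ≤ ω * s * L * (4 * R1) :=
      mul_le_mul_of_nonneg_left (by linarith) (by positivity)
    linarith only [t1, t2]
  have e1 := le_trans (neg_le_neg h) hE1.1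
  have e2 := le_trans hE1.2 h
  have e3 := le_trans (neg_le_neg h2) hE2.1
  have e4 := le_trans hE2.2 h2
  have hN1 : ω * a - ω * a * s / 4 ≤ N := by linarith only [e1]
  have hN2 : N ≤ ω * a + ω * a * s / 4 := by linarith only [e2]
  have hD1 : ω * L - ω * L * s / 4 ≤ D := by linarith only [e3]
  have hD2 : D ≤ ω * L + ω * L * s / 4 := by linarith only [e4]
  exact ratio_aux ω a L s N D hω ha hL hs0 hs1 hN1 hN2 hD1 hD2
end

section
/- Suppose ψ : ℝ → ℝ is differentiable at x0 with Dψ(x0) = ω > 0, and fix R1 > 1. Then there exist a constant R2 > 0 depending only on ω and R1, and for each ε ∈ (0,1) a δ > 0, such that for all z1 < z2 < z3 < z4 in (x0-δ, x0+δ) satisfying conditions (C_{R1,ε}), the cross-ratio distortion satisfies |Dist(z1,z2,z3,z4;ψ) - 1| ≤ R2√ε. -/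
/-!
Differentiability at `x0` gives `|ψ z - ψ x0 - ω (z - x0)| ≤ κ |z - x0|` near `x0`, with
`κ = ω ε / (8 R1²)`. By (c) every `|z_i - x0|` is at most `R1 (z3 - z2)`, and by (a), (b) every
gap `z_j - z_i` entering the cross-ratio is at least `R1⁻¹ (z3 - z2) √ε`; hence each of the four
slopes of `ψ` over these gaps is `ω (1 + e)` with `|e| ≤ √ε / 4`. The distortion is the quotient
of products of two such slopes, so it lies within `8 · √ε / 4 = 2 √ε` of `1`.
-/

noncomputable def Cr (a1 a2 a3 a4 : ℝ) : ℝ :=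
  ((a2 - a1) * (a4 - a3)) / ((a3 - a1) * (a4 - a2))

noncomputable def crDist (a1 a2 a3 a4 : ℝ) (f : ℝ → ℝ) : ℝ :=
  Cr (f a1) (f a2) (f a3) (f a4) / Cr a1 a2 a3 a4

-- No nondegeneracy hypotheses: with `x / 0 = 0` both sides are the same product of inverses.
theorem crDist_eq_slope (ψ : ℝ → ℝ) (z1 z2 z3 z4 : ℝ) :
    crDist z1 z2 z3 z4 ψ =
      slope ψ z1 z2 * slope ψ z3 z4 / (slope ψ z1 z3 * slope ψ z2 z4) := by
  simp only [crDist, Cr, slope_def_field, div_eq_mul_inv, mul_inv, inv_inv]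
  ring

theorem abs_mul_sub_one_le {u v t : ℝ} (hu : |u - 1| ≤ t) (hv : |v - 1| ≤ t) :
    |u * v - 1| ≤ t * (2 + t) :=
  calc |u * v - 1| = |(u - 1) * (v - 1) + (u - 1) + (v - 1)| := by ring_nf
    _ ≤ |u - 1| * |v - 1| + |u - 1| + |v - 1| := by
        rw [← abs_mul]; exact abs_add_three _ _ _
    _ ≤ t * t + t + t := by gcongr; exact (abs_nonneg _).trans hu
    _ = t * (2 + t) := by ring

theorem abs_mul_div_mul_sub_one_le {u1 u2 u3 u4 t : ℝ} (ht : t ≤ 1 / 4)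
    (h1 : |u1 - 1| ≤ t) (h2 : |u2 - 1| ≤ t) (h3 : |u3 - 1| ≤ t) (h4 : |u4 - 1| ≤ t) :
    |u1 * u2 / (u3 * u4) - 1| ≤ 8 * t := by
  have ht0 : 0 ≤ t := (abs_nonneg _).trans h1
  have hden : 9 / 16 ≤ u3 * u4 := by
    rw [abs_le] at h3 h4; nlinarith
  have hden0 : 0 < u3 * u4 := by linarith
  rw [div_sub_one hden0.ne', abs_div, abs_of_pos hden0, div_le_iff₀ hden0]
  calc |u1 * u2 - u3 * u4| = |(u1 * u2 - 1) - (u3 * u4 - 1)| := by ring_nf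
    _ ≤ |u1 * u2 - 1| + |u3 * u4 - 1| := abs_sub _ _
    _ ≤ t * (2 + t) + t * (2 + t) :=
        add_le_add (abs_mul_sub_one_le h1 h2) (abs_mul_sub_one_le h3 h4)
    _ ≤ 8 * t * (9 / 16) := by nlinarith
    _ ≤ 8 * t * (u3 * u4) := by gcongr

theorem HasDerivAt.exists_abs_sub_sub_le {ψ : ℝ → ℝ} {ω x0 : ℝ} (h : HasDerivAt ψ ω x0)
    {κ : ℝ} (hκ : 0 < κ) :
    ∃ δ > 0, ∀ z ∈ Set.Ioo (x0 - δ) (x0 + δ), |ψ z - ψ x0 - ω * (z - x0)| ≤ κ * |z - x0| := by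
  have h := (hasDerivAt_iff_isLittleO.mp h).def hκ
  obtain ⟨δ, hδ, hball⟩ := Metric.eventually_nhds_iff_ball.mp h
  refine ⟨δ, hδ, fun z hz => ?_⟩
  rw [← Real.ball_eq_Ioo] at hz
  simpa only [Real.norm_eq_abs, smul_eq_mul, mul_comm (z - x0)] using hball z hz

theorem abs_slope_sub_le {ψ : ℝ → ℝ} {x0 ω κ a b : ℝ} (hab : a ≠ b)
    (ha : |ψ a - ψ x0 - ω * (a - x0)| ≤ κ * |a - x0|)
    (hb : |ψ b - ψ x0 - ω * (b - x0)| ≤ κ * |b - x0|) :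
    |slope ψ a b - ω| ≤ κ * (|a - x0| + |b - x0|) / |b - a| := by
  have hba : b - a ≠ 0 := sub_ne_zero.mpr hab.symm
  have hdiff : slope ψ a b - ω
      = ((ψ b - ψ x0 - ω * (b - x0)) - (ψ a - ψ x0 - ω * (a - x0))) / (b - a) := by
    rw [slope_def_field]; field_simp; ring
  rw [hdiff, abs_div]
  gcongr
  calc _ ≤ |ψ b - ψ x0 - ω * (b - x0)| + |ψ a - ψ x0 - ω * (a - x0)| := abs_sub _ _
    _ ≤ κ * |b - x0| + κ * |a - x0| := add_le_add hb ha
    _ = κ * (|a - x0| + |b - x0|) := by ring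

theorem abs_slope_div_sub_one_le {ψ : ℝ → ℝ} {x0 ω ε R1 s a b : ℝ}
    (hω : 0 < ω) (hε : 0 < ε) (hR1 : 0 < R1) (hs : 0 < s)
    (ha : |ψ a - ψ x0 - ω * (a - x0)| ≤ ω * ε / (8 * R1 ^ 2) * |a - x0|)
    (hb : |ψ b - ψ x0 - ω * (b - x0)| ≤ ω * ε / (8 * R1 ^ 2) * |b - x0|)
    (ha' : |x0 - a| ≤ R1 * s) (hb' : |x0 - b| ≤ R1 * s)
    (hgap : R1⁻¹ * s * √ε ≤ b - a) :
    |slope ψ a b / ω - 1| ≤ √ε / 4 := by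
  have hsqrt : 0 < √ε := Real.sqrt_pos.mpr hε
  have hgap0 : 0 < b - a := lt_of_lt_of_le (by positivity) hgap
  rw [abs_sub_comm] at ha' hb'
  rw [div_sub_one hω.ne', abs_div, abs_of_pos hω, div_le_iff₀ hω]
  calc |slope ψ a b - ω|
      ≤ ω * ε / (8 * R1 ^ 2) * (|a - x0| + |b - x0|) / |b - a| :=
        abs_slope_sub_le (by linarith) ha hb
    _ ≤ ω * ε / (8 * R1 ^ 2) * (R1 * s + R1 * s) / (R1⁻¹ * s * √ε) := by
        rw [abs_of_pos hgap0]; gcongr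
    _ = √ε / 4 * ω := by
        field_simp
        rw [Real.sq_sqrt hε.le]
        ring

theorem cross_ratio_distortion_estimate_at_differentiability_point
    (ψ : ℝ → ℝ) (x0 ω : ℝ) (hω : 0 < ω)
    (hdiff : HasDerivAt ψ ω x0)
    (R1 : ℝ) (hR1 : 1 < R1) :
    ∃ R2 > 0, ∀ ε ∈ Set.Ioo (0 : ℝ) 1, ∃ δ > 0,
      ∀ z1 z2 z3 z4 : ℝ,
        z1 ∈ Set.Ioo (x0 - δ) (x0 + δ) → z2 ∈ Set.Ioo (x0 - δ) (x0 + δ) →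
        z3 ∈ Set.Ioo (x0 - δ) (x0 + δ) → z4 ∈ Set.Ioo (x0 - δ) (x0 + δ) →
        z1 < z2 → z2 < z3 → z3 < z4 →
        -- condition (a)
        R1⁻¹ * (z3 - z2) * Real.sqrt ε ≤ z2 - z1 →
        z2 - z1 ≤ R1 * (z3 - z2) * ε ^ ((1 : ℝ)/4) →
        -- condition (b)
        R1⁻¹ * (z3 - z2) ≤ z4 - z3 → z4 - z3 ≤ R1 * (z3 - z2) →
        -- condition (c)
        (∀ z ∈ ({z1, z2, z3, z4} : Set ℝ), |x0 - z| ≤ R1 * (z3 - z2)) →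
        |crDist z1 z2 z3 z4 ψ - 1| ≤ R2 * Real.sqrt ε := by
  refine ⟨2, two_pos, fun ε ⟨hε0, hε1⟩ => ?_⟩
  have hR0 : 0 < R1 := one_pos.trans hR1
  obtain ⟨δ, hδ, happrox⟩ := hdiff.exists_abs_sub_sub_le (κ := ω * ε / (8 * R1 ^ 2)) (by positivity)
  refine ⟨δ, hδ, fun z1 z2 z3 z4 hz1 hz2 hz3 hz4 _ h23 _ hA _ hB _ hC => ?_⟩
  have hsqrt : √ε ≤ 1 := Real.sqrt_le_one.mpr hε1.le
  have hgap43 : R1⁻¹ * (z3 - z2) * √ε ≤ z4 - z3 :=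
    (mul_le_of_le_one_right (by have := sub_pos.mpr h23; positivity) hsqrt).trans hB
  have hslope : ∀ a ∈ Set.Ioo (x0 - δ) (x0 + δ), ∀ b ∈ Set.Ioo (x0 - δ) (x0 + δ),
      |x0 - a| ≤ R1 * (z3 - z2) → |x0 - b| ≤ R1 * (z3 - z2) →
      R1⁻¹ * (z3 - z2) * √ε ≤ b - a → |slope ψ a b / ω - 1| ≤ √ε / 4 :=
    fun a ha b hb => abs_slope_div_sub_one_le hω hε0 hR0 (sub_pos.mpr h23)
      (happrox a ha) (happrox b hb)
  have hnormalize : crDist z1 z2 z3 z4 ψ = slope ψ z1 z2 / ω * (slope ψ z3 z4 / ω)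
      / (slope ψ z1 z3 / ω * (slope ψ z2 z4 / ω)) := by
    rw [crDist_eq_slope]; field_simp
  rw [hnormalize]
  calc _ ≤ 8 * (√ε / 4) := abs_mul_div_mul_sub_one_le (by linarith)
        (hslope z1 hz1 z2 hz2 (hC z1 (by simp)) (hC z2 (by simp)) hA)
        (hslope z3 hz3 z4 hz4 (hC z3 (by simp)) (hC z4 (by simp)) hgap43)
        (hslope z1 hz1 z3 hz3 (hC z1 (by simp)) (hC z3 (by simp)) (by linarith))
        (hslope z2 hz2 z4 hz4 (hC z2 (by simp)) (hC z4 (by simp)) (by linarith))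
    _ = 2 * √ε := by ring
end

section
/- Suppose ψ : ℝ → ℝ satisfies ω - ε' ≤ (ψ(b)-ψ(a))/(b-a) ≤ ω + ε' for every pair a < b drawn from a fixed set of four points z1 < z2 < z3 < z4, where ω > 0 and 0 < ε' < ω/2. Then |Dist(z1,z2,z3,z4;ψ) - 1| ≤ C ε'/ω for an absolute constant C (e.g. C = 16 works). -/
set_option maxHeartbeats 1600000

lemma coef_lo_aux (ω ε' : ℝ) (hω : 0 < ω) (hε' : 0 < ε') (h : ε' < ω / 2) :
    (ω - 16 * ε') * (ω + ε') ^ 2 ≤ (ω - ε') ^ 2 * ω := by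
  nlinarith [mul_pos hε' (mul_pos hω hω), mul_pos hε' (mul_pos hε' hω),
    mul_pos hε' (mul_pos hε' hε')]

lemma coef_up_aux (ω ε' : ℝ) (hω : 0 < ω) (hε' : 0 < ε') (h : ε' < ω / 2) :
    (ω + ε') ^ 2 * ω ≤ (ω + 16 * ε') * (ω - ε') ^ 2 := by
  have h1 : (0:ℝ) < 3 * ω - 2 * ε' := by linarith
  have h2 : (0:ℝ) < ω - 2 * ε' := by linarith
  nlinarith [mul_pos hε' (mul_pos h1 h2)]

theorem cross_ratio_distortion_of_difference_quotient_bounds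
    (ψ : ℝ → ℝ) (ω ε' : ℝ) (hω : 0 < ω) (hε' : 0 < ε') (hε'ω : ε' < ω / 2)
    (z1 z2 z3 z4 : ℝ) (h12 : z1 < z2) (h23 : z2 < z3) (h34 : z3 < z4)
    (hquot : ∀ a ∈ ({z1, z2, z3, z4} : Set ℝ), ∀ b ∈ ({z1, z2, z3, z4} : Set ℝ),
      a < b → ω - ε' ≤ (ψ b - ψ a) / (b - a) ∧ (ψ b - ψ a) / (b - a) ≤ ω + ε') :
    |crDist z1 z2 z3 z4 ψ - 1| ≤ 16 * ε' / ω := by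
  have h13 : z1 < z3 := h12.trans h23
  have h24 : z2 < z4 := h23.trans h34
  have hm1 : z1 ∈ ({z1, z2, z3, z4} : Set ℝ) := by simp
  have hm2 : z2 ∈ ({z1, z2, z3, z4} : Set ℝ) := by simp
  have hm3 : z3 ∈ ({z1, z2, z3, z4} : Set ℝ) := by simp
  have hm4 : z4 ∈ ({z1, z2, z3, z4} : Set ℝ) := by simp
  obtain ⟨l12, u12⟩ := hquot z1 hm1 z2 hm2 h12
  obtain ⟨l34, u34⟩ := hquot z3 hm3 z4 hm4 h34
  obtain ⟨l13, u13⟩ := hquot z1 hm1 z3 hm3 h13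
  obtain ⟨l24, u24⟩ := hquot z2 hm2 z4 hm4 h24
  have d12 : (0:ℝ) < z2 - z1 := sub_pos.2 h12
  have d34 : (0:ℝ) < z4 - z3 := sub_pos.2 h34
  have d13 : (0:ℝ) < z3 - z1 := sub_pos.2 h13
  have d24 : (0:ℝ) < z4 - z2 := sub_pos.2 h24
  have hωε : 0 < ω - ε' := by linarith
  have L12 : (ω - ε') * (z2 - z1) ≤ ψ z2 - ψ z1 := (le_div_iff₀ d12).mp l12
  have U12 : ψ z2 - ψ z1 ≤ (ω + ε') * (z2 - z1) := (div_le_iff₀ d12).mp u12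
  have L34 : (ω - ε') * (z4 - z3) ≤ ψ z4 - ψ z3 := (le_div_iff₀ d34).mp l34
  have U34 : ψ z4 - ψ z3 ≤ (ω + ε') * (z4 - z3) := (div_le_iff₀ d34).mp u34
  have L13 : (ω - ε') * (z3 - z1) ≤ ψ z3 - ψ z1 := (le_div_iff₀ d13).mp l13
  have U13 : ψ z3 - ψ z1 ≤ (ω + ε') * (z3 - z1) := (div_le_iff₀ d13).mp u13
  have L24 : (ω - ε') * (z4 - z2) ≤ ψ z4 - ψ z2 := (le_div_iff₀ d24).mp l24
  have U24 : ψ z4 - ψ z2 ≤ (ω + ε') * (z4 - z2) := (div_le_iff₀ d24).mp u24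
  set A := (ψ z2 - ψ z1) * (ψ z4 - ψ z3) with hA
  set B := (ψ z3 - ψ z1) * (ψ z4 - ψ z2) with hB
  set C := (z2 - z1) * (z4 - z3) with hC
  set D := (z3 - z1) * (z4 - z2) with hD
  have p12 : (0:ℝ) < ψ z2 - ψ z1 := lt_of_lt_of_le (by positivity) L12
  have p34 : (0:ℝ) < ψ z4 - ψ z3 := lt_of_lt_of_le (by positivity) L34
  have p13 : (0:ℝ) < ψ z3 - ψ z1 := lt_of_lt_of_le (by positivity) L13
  have p24 : (0:ℝ) < ψ z4 - ψ z2 := lt_of_lt_of_le (by positivity) L24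
  have pA : 0 < A := mul_pos p12 p34
  have pB : 0 < B := mul_pos p13 p24
  have pC : 0 < C := mul_pos d12 d34
  have pD : 0 < D := mul_pos d13 d24
  have key : crDist z1 z2 z3 z4 ψ = (A * D) / (B * C) := by
    unfold crDist Cr
    rw [hA, hB, hC, hD]
    field_simp
  -- product bounds
  have hAup : A ≤ (ω + ε') ^ 2 * C := by
    calc A ≤ ((ω + ε') * (z2 - z1)) * ((ω + ε') * (z4 - z3)) :=
          mul_le_mul U12 U34 p34.le (by positivity)
      _ = (ω + ε') ^ 2 * C := by rw [hC]; ring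
  have hAlo : (ω - ε') ^ 2 * C ≤ A := by
    calc (ω - ε') ^ 2 * C = ((ω - ε') * (z2 - z1)) * ((ω - ε') * (z4 - z3)) := by rw [hC]; ring
      _ ≤ A := mul_le_mul L12 L34 (by positivity) p12.le
  have hBup : B ≤ (ω + ε') ^ 2 * D := by
    calc B ≤ ((ω + ε') * (z3 - z1)) * ((ω + ε') * (z4 - z2)) :=
          mul_le_mul U13 U24 p24.le (by positivity)
      _ = (ω + ε') ^ 2 * D := by rw [hD]; ring
  have hBlo : (ω - ε') ^ 2 * D ≤ B := by
    calc (ω - ε') ^ 2 * D = ((ω - ε') * (z3 - z1)) * ((ω - ε') * (z4 - z2)) := by rw [hD]; ring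
      _ ≤ B := mul_le_mul L13 L24 (by positivity) p13.le
  have h1 : A * D ≤ (ω + ε') ^ 2 * (C * D) := by
    calc A * D ≤ ((ω + ε') ^ 2 * C) * D := mul_le_mul_of_nonneg_right hAup pD.le
      _ = (ω + ε') ^ 2 * (C * D) := by ring
  have h2 : (ω - ε') ^ 2 * (C * D) ≤ B * C := by
    calc (ω - ε') ^ 2 * (C * D) = ((ω - ε') ^ 2 * D) * C := by ring
      _ ≤ B * C := mul_le_mul_of_nonneg_right hBlo pC.le
  have h3 : (ω - ε') ^ 2 * (C * D) ≤ A * D := by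
    calc (ω - ε') ^ 2 * (C * D) = ((ω - ε') ^ 2 * C) * D := by ring
      _ ≤ A * D := mul_le_mul_of_nonneg_right hAlo pD.le
  have h4 : B * C ≤ (ω + ε') ^ 2 * (C * D) := by
    calc B * C ≤ ((ω + ε') ^ 2 * D) * C := mul_le_mul_of_nonneg_right hBup pC.le
      _ = (ω + ε') ^ 2 * (C * D) := by ring
  rw [key, abs_le]
  constructor
  · -- lower bound
    have hle : (ω - 16 * ε') / ω ≤ A * D / (B * C) := by
      rw [div_le_div_iff₀ hω (mul_pos pB pC)]
      rcases le_or_gt (ω - 16 * ε') 0 with h | h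
      · have hx : (ω - 16 * ε') * (B * C) ≤ 0 :=
          mul_nonpos_of_nonpos_of_nonneg h (mul_pos pB pC).le
        have hy : 0 ≤ A * D * ω := by positivity
        linarith
      · have hcoef : (ω - 16 * ε') * (ω + ε') ^ 2 ≤ (ω - ε') ^ 2 * ω :=
          coef_lo_aux ω ε' hω hε' hε'ω
        calc (ω - 16 * ε') * (B * C) ≤ (ω - 16 * ε') * ((ω + ε') ^ 2 * (C * D)) :=
              mul_le_mul_of_nonneg_left h4 h.le
          _ = ((ω - 16 * ε') * (ω + ε') ^ 2) * (C * D) := by ring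
          _ ≤ ((ω - ε') ^ 2 * ω) * (C * D) :=
              mul_le_mul_of_nonneg_right hcoef (by positivity)
          _ = ((ω - ε') ^ 2 * (C * D)) * ω := by ring
          _ ≤ (A * D) * ω := mul_le_mul_of_nonneg_right h3 hω.le
    have heq : (ω - 16 * ε') / ω = 1 - 16 * ε' / ω := by
      field_simp
    rw [heq] at hle
    linarith
  · -- upper bound
    have hle : A * D / (B * C) ≤ (ω + 16 * ε') / ω := by
      rw [div_le_div_iff₀ (mul_pos pB pC) hω]
      have hcoef : (ω + ε') ^ 2 * ω ≤ (ω + 16 * ε') * (ω - ε') ^ 2 :=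
        coef_up_aux ω ε' hω hε' hε'ω
      calc A * D * ω ≤ ((ω + ε') ^ 2 * (C * D)) * ω := mul_le_mul_of_nonneg_right h1 hω.le
        _ = ((ω + ε') ^ 2 * ω) * (C * D) := by ring
        _ ≤ ((ω + 16 * ε') * (ω - ε') ^ 2) * (C * D) :=
            mul_le_mul_of_nonneg_right hcoef (by positivity)
        _ = (ω + 16 * ε') * ((ω - ε') ^ 2 * (C * D)) := by ring
        _ ≤ (ω + 16 * ε') * (B * C) := mul_le_mul_of_nonneg_left h2 (by linarith)
    have heq : (ω + 16 * ε') / ω = 1 + 16 * ε' / ω := by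
      field_simp
    rw [heq] at hle
    linarith
end

section
/- Let f : ℝ → ℝ be continuous, strictly increasing, twice continuously differentiable on ℝ \ {b} with Df bounded above and below by positive constants and D²f bounded, and with one-sided derivatives Df₋(b), Df₊(b) at b, both positive. Let σ = Df₋(b)/Df₊(b). For points z1 < z2 < z3 < z4 with b ∈ [z1, z2], set α = z2-z1, β = z3-z2, ξ = β/α, ζ = (z2-b)/α. Then |Dist(z1,z2,z3,z4;f) - ([σ+(1-σ)ζ](1+ξ))/(σ+(1-σ)ζ+ξ)| ≤ K1 (z4-z1) for some constant K1 depending only on f (on the bounds for Df and D²f and on σ). -/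
open Set Filter Topology
set_option linter.unusedSectionVars false
set_option maxHeartbeats 2000000

lemma mvt_bound {g g' : ℝ → ℝ} {x y lo hi : ℝ} (hxy : x ≤ y)
    (hcg : ContinuousOn g (Set.Icc x y))
    (hd : ∀ s ∈ Set.Ioo x y, HasDerivAt g (g' s) s)
    (hlo : ∀ s ∈ Set.Ioo x y, lo ≤ g' s) (hhi : ∀ s ∈ Set.Ioo x y, g' s ≤ hi) :
    lo * (y - x) ≤ g y - g x ∧ g y - g x ≤ hi * (y - x) := by
  have hD : Convex ℝ (Set.Icc x y) := convex_Icc x y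
  have hdiff : DifferentiableOn ℝ g (interior (Set.Icc x y)) := by
    rw [interior_Icc]; exact fun s hs => ((hd s hs).differentiableAt).differentiableWithinAt
  have h1 := hD.mul_sub_le_image_sub_of_le_deriv hcg hdiff (C := lo) (fun s hs => by
    rw [interior_Icc] at hs; rw [(hd s hs).deriv]; exact hlo s hs) x ⟨le_refl x, hxy⟩ y ⟨hxy, le_refl y⟩ hxy
  have h2 := hD.image_sub_le_mul_sub_of_deriv_le hcg hdiff (C := hi) (fun s hs => by
    rw [interior_Icc] at hs; rw [(hd s hs).deriv]; exact hhi s hs) x ⟨le_refl x, hxy⟩ y ⟨hxy, le_refl y⟩ hxy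
  exact ⟨h1, h2⟩

lemma keyid (A B G21 G31 dp d21 d31 d42 d43 : ℝ) (hB : B ≠ 0) (hG31 : G31 ≠ 0)
    (hd21 : d21 ≠ 0) (hd42 : d42 ≠ 0) (hd43 : d43 ≠ 0) (hdp : dp ≠ 0) :
    A * (d31 * d42) / (B * (d21 * d43)) - G21 * d31 / (G31 * d21)
    = ((A - G21 * (dp * d43)) * (G31 * (dp * d42)) + G21 * (dp * d43) * (G31 * (dp * d42) - B)) * (d31 * d42)
      / (B * (G31 * (dp * d42)) * (d21 * d43)) := by
  field_simp
  ring

theorem cross_ratio_distortion_near_break_point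
    (f f' f'' : ℝ → ℝ) (b : ℝ)
    (hcont : Continuous f) (hmono : StrictMono f)
    (c1 c2 M : ℝ) (hc1 : 0 < c1) (hc12 : c1 ≤ c2) (hM : 0 ≤ M)
    (hderiv : ∀ x ≠ b, HasDerivAt f (f' x) x)
    (hderiv2 : ∀ x ≠ b, HasDerivAt f' (f'' x) x)
    (hcont2 : ContinuousOn f'' {x : ℝ | x ≠ b})
    (hbound1 : ∀ x ≠ b, c1 ≤ f' x ∧ f' x ≤ c2)
    (hbound2 : ∀ x ≠ b, |f'' x| ≤ M)
    (dm dp : ℝ) (hdm : 0 < dm) (hdp : 0 < dp)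
    (hleft : HasDerivWithinAt f dm (Set.Iic b) b)
    (hright : HasDerivWithinAt f dp (Set.Ici b) b)
    (σ : ℝ) (hσ : σ = dm / dp) :
    ∃ K1 > 0, ∀ z1 z2 z3 z4 : ℝ,
      z1 < z2 → z2 < z3 → z3 < z4 → b ∈ Set.Icc z1 z2 →
      |crDist z1 z2 z3 z4 f -
          ((σ + (1 - σ) * ((z2 - b) / (z2 - z1))) * (1 + (z3 - z2) / (z2 - z1))) /
            (σ + (1 - σ) * ((z2 - b) / (z2 - z1)) + (z3 - z2) / (z2 - z1))|
        ≤ K1 * (z4 - z1) := by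
  -- Step 1: uniform slope bounds for f
  have hseg : ∀ x y : ℝ, x ≤ y → b ∉ Set.Ioo x y →
      c1 * (y - x) ≤ f y - f x ∧ f y - f x ≤ c2 * (y - x) := by
    intro x y hxy hbo
    exact mvt_bound hxy hcont.continuousOn (fun s hs => hderiv s (fun h => hbo (h ▸ hs)))
      (fun s hs => (hbound1 s (fun h => hbo (h ▸ hs))).1)
      (fun s hs => (hbound1 s (fun h => hbo (h ▸ hs))).2)
  have hfc : ∀ x y : ℝ, x ≤ y →
      c1 * (y - x) ≤ f y - f x ∧ f y - f x ≤ c2 * (y - x) := by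
    intro x y hxy
    by_cases hbo : b ∈ Set.Ioo x y
    · have h1 := hseg x b hbo.1.le (fun h => absurd h.2 (lt_irrefl b))
      have h2 := hseg b y hbo.2.le (fun h => absurd h.1 (lt_irrefl b))
      constructor <;> nlinarith [h1.1, h1.2, h2.1, h2.2]
    · exact hseg x y hxy hbo
  -- Step 2: f' Lipschitz off b
  have hLipR : ∀ u v : ℝ, b < u → u ≤ v → |f' v - f' u| ≤ M * (v - u) := by
    intro u v hbu huv
    have hcg : ContinuousOn f' (Set.Icc u v) := fun s hs =>
      ((hderiv2 s (ne_of_gt (lt_of_lt_of_le hbu hs.1))).differentiableAt.continuousAt).continuousWithinAt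
    have key := mvt_bound (g := f') (g' := f'') huv hcg
      (fun s hs => hderiv2 s (ne_of_gt (hbu.trans hs.1)))
      (fun s hs => neg_le_of_abs_le (hbound2 s (ne_of_gt (hbu.trans hs.1))))
      (fun s hs => le_of_abs_le (hbound2 s (ne_of_gt (hbu.trans hs.1))))
    rw [abs_le]; constructor <;> nlinarith [key.1, key.2]
  have hLipL : ∀ u v : ℝ, u ≤ v → v < b → |f' v - f' u| ≤ M * (v - u) := by
    intro u v huv hvb
    have hcg : ContinuousOn f' (Set.Icc u v) := fun s hs =>
      ((hderiv2 s (ne_of_lt (lt_of_le_of_lt hs.2 hvb))).differentiableAt.continuousAt).continuousWithinAt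
    have key := mvt_bound (g := f') (g' := f'') huv hcg
      (fun s hs => hderiv2 s (ne_of_lt (hs.2.trans hvb)))
      (fun s hs => neg_le_of_abs_le (hbound2 s (ne_of_lt (hs.2.trans hvb))))
      (fun s hs => le_of_abs_le (hbound2 s (ne_of_lt (hs.2.trans hvb))))
    rw [abs_le]; constructor <;> nlinarith [key.1, key.2]
  -- Step 3: slope limits
  have hslR : Tendsto (slope f b) (𝓝[Set.Ioi b] b) (𝓝 dp) := by
    have := hasDerivWithinAt_iff_tendsto_slope.1 hright
    rwa [Set.Ici_sdiff_left] at this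
  have hslL : Tendsto (slope f b) (𝓝[Set.Iio b] b) (𝓝 dm) := by
    have := hasDerivWithinAt_iff_tendsto_slope.1 hleft
    rwa [Set.Iic_diff_right] at this
  -- Step 4: c1 ≤ dp, dm ≤ c2
  have hdpr : c1 ≤ dp ∧ dp ≤ c2 := by
    have hev1 : ∀ᶠ x in 𝓝[Set.Ioi b] b, c1 ≤ slope f b x := by
      filter_upwards [self_mem_nhdsWithin] with x hx
      have h := hfc b x (le_of_lt hx)
      rw [slope_def_field, le_div_iff₀ (sub_pos.2 (mem_Ioi.1 hx))]
      linarith [h.1]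
    have hev2 : ∀ᶠ x in 𝓝[Set.Ioi b] b, slope f b x ≤ c2 := by
      filter_upwards [self_mem_nhdsWithin] with x hx
      have h := hfc b x (le_of_lt hx)
      rw [slope_def_field, div_le_iff₀ (sub_pos.2 (mem_Ioi.1 hx))]
      linarith [h.2]
    exact ⟨ge_of_tendsto hslR hev1, le_of_tendsto hslR hev2⟩
  have hdmr : c1 ≤ dm ∧ dm ≤ c2 := by
    have hev1 : ∀ᶠ x in 𝓝[Set.Iio b] b, c1 ≤ slope f b x := by
      filter_upwards [self_mem_nhdsWithin] with x hx
      have h := hfc x b (le_of_lt hx)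
      have hxb : x - b < 0 := sub_neg.2 (mem_Iio.1 hx)
      rw [slope_def_field, le_div_iff_of_neg hxb]
      nlinarith [h.2]
    have hev2 : ∀ᶠ x in 𝓝[Set.Iio b] b, slope f b x ≤ c2 := by
      filter_upwards [self_mem_nhdsWithin] with x hx
      have h := hfc x b (le_of_lt hx)
      have hxb : x - b < 0 := sub_neg.2 (mem_Iio.1 hx)
      rw [slope_def_field, div_le_iff_of_neg hxb]
      nlinarith [h.1]
    exact ⟨ge_of_tendsto hslL hev1, le_of_tendsto hslL hev2⟩
  -- Step 5: f' near dp on the right, near dm on the left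
  have hdpR : ∀ t : ℝ, b < t → |f' t - dp| ≤ M * (t - b) := by
    intro t hbt
    have bnd : ∀ s ∈ Set.Ioo b t, f' t - M * (t - b) ≤ f' s ∧ f' s ≤ f' t + M * (t - b) := by
      intro s hs
      have h1 := abs_le.1 (hLipR s t hs.1 hs.2.le)
      have h2 : M * (t - s) ≤ M * (t - b) := by nlinarith [hs.1]
      constructor <;> linarith [h1.1, h1.2]
    have hev1 : ∀ᶠ x in 𝓝[Set.Ioi b] b, slope f b x ≤ f' t + M * (t - b) := by
      filter_upwards [Ioo_mem_nhdsGT_of_mem ⟨le_refl b, hbt⟩] with x hx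
      have key := mvt_bound (g := f) (g' := f') hx.1.le hcont.continuousOn
        (fun s hs => hderiv s (ne_of_gt hs.1))
        (lo := f' t - M * (t - b)) (hi := f' t + M * (t - b))
        (fun s hs => (bnd s ⟨hs.1, hs.2.trans hx.2⟩).1)
        (fun s hs => (bnd s ⟨hs.1, hs.2.trans hx.2⟩).2)
      rw [slope_def_field, div_le_iff₀ (sub_pos.2 hx.1)]
      linarith [key.2]
    have hev2 : ∀ᶠ x in 𝓝[Set.Ioi b] b, f' t - M * (t - b) ≤ slope f b x := by
      filter_upwards [Ioo_mem_nhdsGT_of_mem ⟨le_refl b, hbt⟩] with x hx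
      have key := mvt_bound (g := f) (g' := f') hx.1.le hcont.continuousOn
        (fun s hs => hderiv s (ne_of_gt hs.1))
        (lo := f' t - M * (t - b)) (hi := f' t + M * (t - b))
        (fun s hs => (bnd s ⟨hs.1, hs.2.trans hx.2⟩).1)
        (fun s hs => (bnd s ⟨hs.1, hs.2.trans hx.2⟩).2)
      rw [slope_def_field, le_div_iff₀ (sub_pos.2 hx.1)]
      linarith [key.1]
    have l1 := le_of_tendsto hslR hev1
    have l2 := ge_of_tendsto hslR hev2
    rw [abs_le]; constructor <;> linarith
  have hdmL : ∀ t : ℝ, t < b → |f' t - dm| ≤ M * (b - t) := by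
    intro t htb
    have bnd : ∀ s ∈ Set.Ioo t b, f' t - M * (b - t) ≤ f' s ∧ f' s ≤ f' t + M * (b - t) := by
      intro s hs
      have h1 := abs_le.1 (hLipL t s hs.1.le hs.2)
      have h2 : M * (s - t) ≤ M * (b - t) := by nlinarith [hs.2]
      constructor <;> linarith [h1.1, h1.2]
    have hev1 : ∀ᶠ x in 𝓝[Set.Iio b] b, slope f b x ≤ f' t + M * (b - t) := by
      filter_upwards [Ioo_mem_nhdsLT_of_mem ⟨htb, le_refl b⟩] with x hx
      have key := mvt_bound (g := f) (g' := f') hx.2.le hcont.continuousOn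
        (fun s hs => hderiv s (ne_of_lt hs.2))
        (lo := f' t - M * (b - t)) (hi := f' t + M * (b - t))
        (fun s hs => (bnd s ⟨hx.1.trans hs.1, hs.2⟩).1)
        (fun s hs => (bnd s ⟨hx.1.trans hs.1, hs.2⟩).2)
      have hxb : x - b < 0 := sub_neg.2 hx.2
      rw [slope_def_field, div_le_iff_of_neg hxb]
      nlinarith [key.1]
    have hev2 : ∀ᶠ x in 𝓝[Set.Iio b] b, f' t - M * (b - t) ≤ slope f b x := by
      filter_upwards [Ioo_mem_nhdsLT_of_mem ⟨htb, le_refl b⟩] with x hx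
      have key := mvt_bound (g := f) (g' := f') hx.2.le hcont.continuousOn
        (fun s hs => hderiv s (ne_of_lt hs.2))
        (lo := f' t - M * (b - t)) (hi := f' t + M * (b - t))
        (fun s hs => (bnd s ⟨hx.1.trans hs.1, hs.2⟩).1)
        (fun s hs => (bnd s ⟨hx.1.trans hs.1, hs.2⟩).2)
      have hxb : x - b < 0 := sub_neg.2 hx.2
      rw [slope_def_field, le_div_iff_of_neg hxb]
      nlinarith [key.2]
    have l1 := le_of_tendsto hslL hev1
    have l2 := ge_of_tendsto hslL hev2
    rw [abs_le]; constructor <;> linarith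
  -- Step 6: key increment estimates
  have hKR : ∀ x y : ℝ, b ≤ x → x ≤ y → |f y - f x - dp * (y - x)| ≤ M * (y - b) * (y - x) := by
    intro x y hbx hxy
    rcases eq_or_lt_of_le hxy with rfl | hxy'
    · simp
    have key := mvt_bound (g := f) (g' := f') hxy hcont.continuousOn
      (fun s hs => hderiv s (ne_of_gt (lt_of_le_of_lt hbx hs.1)))
      (lo := dp - M * (y - b)) (hi := dp + M * (y - b))
      (fun s hs => by
        have h1 := abs_le.1 (hdpR s (lt_of_le_of_lt hbx hs.1))
        have h2 : M * (s - b) ≤ M * (y - b) := by nlinarith [hs.2]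
        linarith [h1.1])
      (fun s hs => by
        have h1 := abs_le.1 (hdpR s (lt_of_le_of_lt hbx hs.1))
        have h2 : M * (s - b) ≤ M * (y - b) := by nlinarith [hs.2]
        linarith [h1.2])
    rw [abs_le]; constructor <;> nlinarith [key.1, key.2]
  have hKL : ∀ x y : ℝ, x ≤ y → y ≤ b → |f y - f x - dm * (y - x)| ≤ M * (b - x) * (y - x) := by
    intro x y hxy hyb
    rcases eq_or_lt_of_le hxy with rfl | hxy'
    · simp
    have key := mvt_bound (g := f) (g' := f') hxy hcont.continuousOn
      (fun s hs => hderiv s (ne_of_lt (lt_of_lt_of_le hs.2 hyb)))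
      (lo := dm - M * (b - x)) (hi := dm + M * (b - x))
      (fun s hs => by
        have h1 := abs_le.1 (hdmL s (lt_of_lt_of_le hs.2 hyb))
        have h2 : M * (b - s) ≤ M * (b - x) := by nlinarith [hs.1]
        linarith [h1.1])
      (fun s hs => by
        have h1 := abs_le.1 (hdmL s (lt_of_lt_of_le hs.2 hyb))
        have h2 : M * (b - s) ≤ M * (b - x) := by nlinarith [hs.1]
        linarith [h1.2])
    rw [abs_le]; constructor <;> nlinarith [key.1, key.2]
  
  -- Step 7: main estimate
  have hc2 : 0 < c2 := lt_of_lt_of_le hc1 hc12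
  refine ⟨4 * M * c2 ^ 3 / c1 ^ 4 + 1, by positivity, ?_⟩
  intro z1 z2 z3 z4 h12 h23 h34 hb
  obtain ⟨hb1, hb2⟩ := hb
  have p21 : (0:ℝ) < z2 - z1 := by linarith
  have p31 : (0:ℝ) < z3 - z1 := by linarith
  have p41 : (0:ℝ) < z4 - z1 := by linarith
  have p42 : (0:ℝ) < z4 - z2 := by linarith
  have p43 : (0:ℝ) < z4 - z3 := by linarith
  have p32 : (0:ℝ) < z3 - z2 := by linarith
  have n21 : (z2 - z1) ≠ 0 := ne_of_gt p21
  have n31 : (z3 - z1) ≠ 0 := ne_of_gt p31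
  have n42 : (z4 - z2) ≠ 0 := ne_of_gt p42
  have n43 : (z4 - z3) ≠ 0 := ne_of_gt p43
  have ndp : dp ≠ 0 := ne_of_gt hdp
  set G21 : ℝ := dp * (z2 - b) + dm * (b - z1) with hG21
  set G31 : ℝ := dp * (z3 - b) + dm * (b - z1) with hG31
  -- increment estimates
  have e2b := hKR b z2 le_rfl hb2
  have e3b := hKR b z3 le_rfl (by linarith)
  have eb1 := hKL z1 b hb1 le_rfl
  have e42 := hKR z2 z4 hb2 (by linarith)
  have e43 := hKR z3 z4 (by linarith) h34.le
  have e21 : |(f z2 - f z1) - G21| ≤ M * (z4 - z1) * (z2 - z1) := by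
    have hid : (f z2 - f z1) - G21 =
        (f z2 - f b - dp * (z2 - b)) + (f b - f z1 - dm * (b - z1)) := by
      rw [hG21]; ring
    rw [hid]
    refine (abs_add_le _ _).trans ?_
    linarith [e2b, eb1,
      mul_nonneg (mul_nonneg hM (sub_nonneg.2 hb2)) (show (0:ℝ) ≤ (z4 - z1) - (z2 - b) by linarith),
      mul_nonneg (mul_nonneg hM (sub_nonneg.2 hb1)) (show (0:ℝ) ≤ (z4 - z1) - (b - z1) by linarith)]
  have e31 : |(f z3 - f z1) - G31| ≤ M * (z4 - z1) * (z3 - z1) := by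
    have hid : (f z3 - f z1) - G31 =
        (f z3 - f b - dp * (z3 - b)) + (f b - f z1 - dm * (b - z1)) := by
      rw [hG31]; ring
    rw [hid]
    refine (abs_add_le _ _).trans ?_
    have hz3b : (0:ℝ) ≤ z3 - b := by linarith
    linarith [e3b, eb1,
      mul_nonneg (mul_nonneg hM hz3b) (show (0:ℝ) ≤ (z4 - z1) - (z3 - b) by linarith),
      mul_nonneg (mul_nonneg hM (sub_nonneg.2 hb1)) (show (0:ℝ) ≤ (z4 - z1) - (b - z1) by linarith)]
  have e42' : |(f z4 - f z2) - dp * (z4 - z2)| ≤ M * (z4 - z1) * (z4 - z2) := by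
    refine e42.trans ?_
    linarith [mul_nonneg (mul_nonneg hM p42.le) (show (0:ℝ) ≤ (z4 - z1) - (z4 - b) by linarith)]
  have e43' : |(f z4 - f z3) - dp * (z4 - z3)| ≤ M * (z4 - z1) * (z4 - z3) := by
    refine e43.trans ?_
    linarith [mul_nonneg (mul_nonneg hM p43.le) (show (0:ℝ) ≤ (z4 - z1) - (z4 - b) by linarith)]
  -- size bounds
  have F21b := hfc z1 z2 h12.le
  have F31b := hfc z1 z3 (by linarith)
  have F42b := hfc z2 z4 (by linarith)
  have F43b := hfc z3 z4 h34.le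
  have F31pos : 0 < f z3 - f z1 := lt_of_lt_of_le (by positivity) F31b.1
  have F42pos : 0 < f z4 - f z2 := lt_of_lt_of_le (by positivity) F42b.1
  have F43pos : 0 < f z4 - f z3 := lt_of_lt_of_le (by positivity) F43b.1
  have hG21l : c1 * (z2 - z1) ≤ G21 := by
    rw [hG21]; linarith [mul_nonneg (sub_nonneg.2 hdpr.1) (sub_nonneg.2 hb2),
      mul_nonneg (sub_nonneg.2 hdmr.1) (sub_nonneg.2 hb1)]
  have hG21u : G21 ≤ c2 * (z2 - z1) := by
    rw [hG21]; linarith [mul_nonneg (sub_nonneg.2 hdpr.2) (sub_nonneg.2 hb2),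
      mul_nonneg (sub_nonneg.2 hdmr.2) (sub_nonneg.2 hb1)]
  have hG31l : c1 * (z3 - z1) ≤ G31 := by
    have hz3b : (0:ℝ) ≤ z3 - b := by linarith
    rw [hG31]; linarith [mul_nonneg (sub_nonneg.2 hdpr.1) hz3b,
      mul_nonneg (sub_nonneg.2 hdmr.1) (sub_nonneg.2 hb1)]
  have hG31u : G31 ≤ c2 * (z3 - z1) := by
    have hz3b : (0:ℝ) ≤ z3 - b := by linarith
    rw [hG31]; linarith [mul_nonneg (sub_nonneg.2 hdpr.2) hz3b,
      mul_nonneg (sub_nonneg.2 hdmr.2) (sub_nonneg.2 hb1)]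
  have hG21pos : 0 < G21 := lt_of_lt_of_le (by positivity) hG21l
  have hG31pos : 0 < G31 := lt_of_lt_of_le (by positivity) hG31l
  set A : ℝ := (f z2 - f z1) * (f z4 - f z3) with hA
  set B : ℝ := (f z3 - f z1) * (f z4 - f z2) with hB
  set A' : ℝ := G21 * (dp * (z4 - z3)) with hA'
  set B' : ℝ := G31 * (dp * (z4 - z2)) with hB'
  set P : ℝ := (z2 - z1) * (z4 - z3) with hP
  set Q : ℝ := (z3 - z1) * (z4 - z2) with hQ
  have hPpos : 0 < P := mul_pos p21 p43
  have hQpos : 0 < Q := mul_pos p31 p42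
  have hBpos : 0 < B := mul_pos F31pos F42pos
  have hB'pos : 0 < B' := mul_pos hG31pos (by positivity)
  have nB : B ≠ 0 := ne_of_gt hBpos
  have nB' : B' ≠ 0 := ne_of_gt hB'pos
  have nG21 : G21 ≠ 0 := ne_of_gt hG21pos
  have nG31 : G31 ≠ 0 := ne_of_gt hG31pos
  set N : ℝ := ((A - A') * B' + A' * (B' - B)) * Q with hN
  set D : ℝ := (B * B') * P with hD
  have hDpos : 0 < D := by positivity
  -- rewrite crDist
  have hcrform : crDist z1 z2 z3 z4 f = A * Q / (B * P) := by
    unfold crDist Cr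
    rw [hA, hB, hP, hQ]
    rw [div_div_div_comm]
    rw [div_div_eq_mul_div, div_mul_eq_mul_div, div_div]
    ring_nf
  -- rewrite the model expression
  have hden : σ + (1 - σ) * ((z2 - b) / (z2 - z1)) + (z3 - z2) / (z2 - z1)
      = G31 / (dp * (z2 - z1)) := by
    rw [hσ, hG31]; field_simp; ring
  have hnum : (σ + (1 - σ) * ((z2 - b) / (z2 - z1))) * (1 + (z3 - z2) / (z2 - z1))
      = (G21 * (z3 - z1)) / (dp * (z2 - z1) * (z2 - z1)) := by
    rw [hσ, hG21]; field_simp; ring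
  have hexpr : ((σ + (1 - σ) * ((z2 - b) / (z2 - z1))) * (1 + (z3 - z2) / (z2 - z1))) /
      (σ + (1 - σ) * ((z2 - b) / (z2 - z1)) + (z3 - z2) / (z2 - z1))
      = (G21 * (z3 - z1)) / (G31 * (z2 - z1)) := by
    rw [hden, hnum]
    field_simp
  rw [hcrform, hexpr]
  -- the difference as N / D
  have hid : A * Q / (B * P) - (G21 * (z3 - z1)) / (G31 * (z2 - z1)) = N / D := by
    rw [hN, hD, hA', hB', hP, hQ]
    exact keyid A B G21 G31 dp (z2 - z1) (z3 - z1) (z4 - z2) (z4 - z3) nB nG31 n21 n42 n43 ndp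
  rw [hid, abs_div, abs_of_pos hDpos, div_le_iff₀ hDpos]
  -- numerator bound
  have habsAA' : |A - A'| ≤ 2 * M * c2 * (z4 - z1) * P := by
    have hid2 : A - A' = ((f z2 - f z1) - G21) * (f z4 - f z3)
        + G21 * ((f z4 - f z3) - dp * (z4 - z3)) := by rw [hA, hA']; ring
    rw [hid2]
    refine (abs_add_le _ _).trans ?_
    have b2 : |f z4 - f z3| ≤ c2 * (z4 - z3) := by
      rw [abs_of_pos F43pos]; exact F43b.2
    have b3 : |G21| ≤ c2 * (z2 - z1) := by
      rw [abs_of_pos hG21pos]; exact hG21u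
    have t1 : |((f z2 - f z1) - G21) * (f z4 - f z3)| ≤ (M * (z4 - z1) * (z2 - z1)) * (c2 * (z4 - z3)) := by
      rw [abs_mul]; exact mul_le_mul e21 b2 (abs_nonneg _) (by positivity)
    have t2 : |G21 * ((f z4 - f z3) - dp * (z4 - z3))| ≤ (c2 * (z2 - z1)) * (M * (z4 - z1) * (z4 - z3)) := by
      rw [abs_mul]; exact mul_le_mul b3 e43' (abs_nonneg _) (by positivity)
    rw [hP]
    refine (add_le_add t1 t2).trans (le_of_eq ?_)
    ring
  have habsBB' : |B' - B| ≤ 2 * M * c2 * (z4 - z1) * Q := by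
    have hid2 : B' - B = (G31 - (f z3 - f z1)) * (dp * (z4 - z2))
        + (f z3 - f z1) * (dp * (z4 - z2) - (f z4 - f z2)) := by rw [hB, hB']; ring
    rw [hid2]
    refine (abs_add_le _ _).trans ?_
    have b1 : |G31 - (f z3 - f z1)| ≤ M * (z4 - z1) * (z3 - z1) := by
      rw [abs_sub_comm]; exact e31
    have b2 : |dp * (z4 - z2)| ≤ c2 * (z4 - z2) := by
      rw [abs_of_pos (by positivity)]; exact mul_le_mul_of_nonneg_right hdpr.2 p42.le
    have b3 : |f z3 - f z1| ≤ c2 * (z3 - z1) := by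
      rw [abs_of_pos F31pos]; exact F31b.2
    have b4 : |dp * (z4 - z2) - (f z4 - f z2)| ≤ M * (z4 - z1) * (z4 - z2) := by
      rw [abs_sub_comm]; exact e42'
    have t1 : |(G31 - (f z3 - f z1)) * (dp * (z4 - z2))| ≤ (M * (z4 - z1) * (z3 - z1)) * (c2 * (z4 - z2)) := by
      rw [abs_mul]; exact mul_le_mul b1 b2 (abs_nonneg _) (by positivity)
    have t2 : |(f z3 - f z1) * (dp * (z4 - z2) - (f z4 - f z2))| ≤ (c2 * (z3 - z1)) * (M * (z4 - z1) * (z4 - z2)) := by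
      rw [abs_mul]; exact mul_le_mul b3 b4 (abs_nonneg _) (by positivity)
    rw [hQ]
    refine (add_le_add t1 t2).trans (le_of_eq ?_)
    ring
  have hA'ub : A' ≤ c2 ^ 2 * P := by
    rw [hA', hP]
    have t : dp * (z4 - z3) ≤ c2 * (z4 - z3) := mul_le_mul_of_nonneg_right hdpr.2 p43.le
    calc G21 * (dp * (z4 - z3)) ≤ (c2 * (z2 - z1)) * (c2 * (z4 - z3)) :=
          mul_le_mul hG21u t (by positivity) (by positivity)
      _ = c2 ^ 2 * ((z2 - z1) * (z4 - z3)) := by ring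
  have hA'pos : 0 < A' := by rw [hA']; positivity
  have hB'ub : B' ≤ c2 ^ 2 * Q := by
    rw [hB', hQ]
    have t : dp * (z4 - z2) ≤ c2 * (z4 - z2) := mul_le_mul_of_nonneg_right hdpr.2 p42.le
    calc G31 * (dp * (z4 - z2)) ≤ (c2 * (z3 - z1)) * (c2 * (z4 - z2)) :=
          mul_le_mul hG31u t (by positivity) (by positivity)
      _ = c2 ^ 2 * ((z3 - z1) * (z4 - z2)) := by ring
  have hB'lb : c1 ^ 2 * Q ≤ B' := by
    rw [hB', hQ]
    have t : c1 * (z4 - z2) ≤ dp * (z4 - z2) := mul_le_mul_of_nonneg_right hdpr.1 p42.le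
    calc c1 ^ 2 * ((z3 - z1) * (z4 - z2)) = (c1 * (z3 - z1)) * (c1 * (z4 - z2)) := by ring
      _ ≤ G31 * (dp * (z4 - z2)) := mul_le_mul hG31l t (by positivity) hG31pos.le
  have hBlb : c1 ^ 2 * Q ≤ B := by
    rw [hB, hQ]
    calc c1 ^ 2 * ((z3 - z1) * (z4 - z2)) = (c1 * (z3 - z1)) * (c1 * (z4 - z2)) := by ring
      _ ≤ (f z3 - f z1) * (f z4 - f z2) := mul_le_mul F31b.1 F42b.1 (by positivity) F31pos.le
  -- assemble
  have hNbound : |N| ≤ 4 * M * c2 ^ 3 * (z4 - z1) * (P * Q * Q) := by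
    rw [hN, abs_mul, abs_of_pos hQpos]
    have step : |(A - A') * B' + A' * (B' - B)| ≤
        (2 * M * c2 * (z4 - z1) * P) * (c2 ^ 2 * Q) + (c2 ^ 2 * P) * (2 * M * c2 * (z4 - z1) * Q) := by
      refine (abs_add_le _ _).trans ?_
      have t1 : |(A - A') * B'| ≤ (2 * M * c2 * (z4 - z1) * P) * (c2 ^ 2 * Q) := by
        rw [abs_mul]
        refine mul_le_mul habsAA' ?_ (abs_nonneg _) (by positivity)
        rw [abs_of_pos hB'pos]; exact hB'ub
      have t2 : |A' * (B' - B)| ≤ (c2 ^ 2 * P) * (2 * M * c2 * (z4 - z1) * Q) := by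
        rw [abs_mul]
        refine mul_le_mul ?_ habsBB' (abs_nonneg _) (by positivity)
        rw [abs_of_pos hA'pos]; exact hA'ub
      exact add_le_add t1 t2
    calc |(A - A') * B' + A' * (B' - B)| * Q
        ≤ ((2 * M * c2 * (z4 - z1) * P) * (c2 ^ 2 * Q) + (c2 ^ 2 * P) * (2 * M * c2 * (z4 - z1) * Q)) * Q :=
          mul_le_mul_of_nonneg_right step hQpos.le
      _ = 4 * M * c2 ^ 3 * (z4 - z1) * (P * Q * Q) := by ring
  have hDlb : c1 ^ 4 * (P * Q * Q) ≤ D := by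
    rw [hD]
    have t1 : (c1 ^ 2 * Q) * (c1 ^ 2 * Q) ≤ B * B' :=
      mul_le_mul hBlb hB'lb (by positivity) hBpos.le
    calc c1 ^ 4 * (P * Q * Q) = ((c1 ^ 2 * Q) * (c1 ^ 2 * Q)) * P := by ring
      _ ≤ (B * B') * P := mul_le_mul_of_nonneg_right t1 hPpos.le
  have hfinal : 4 * M * c2 ^ 3 * (z4 - z1) * (P * Q * Q) ≤
      (4 * M * c2 ^ 3 / c1 ^ 4 + 1) * (z4 - z1) * D := by
    have t0 : (0:ℝ) ≤ 4 * M * c2 ^ 3 / c1 ^ 4 * (z4 - z1) := by positivity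
    have t1 : (4 * M * c2 ^ 3 / c1 ^ 4 * (z4 - z1)) * (c1 ^ 4 * (P * Q * Q)) ≤
        (4 * M * c2 ^ 3 / c1 ^ 4 * (z4 - z1)) * D := mul_le_mul_of_nonneg_left hDlb t0
    have t2 : (4 * M * c2 ^ 3 / c1 ^ 4 * (z4 - z1)) * (c1 ^ 4 * (P * Q * Q)) =
        4 * M * c2 ^ 3 * (z4 - z1) * (P * Q * Q) := by
      field_simp
    linarith [t1, t2, mul_pos p41 hDpos]
  linarith [hNbound, hfinal]
end

section
/- Define F(x, t, σ) = (σ+(1-σ)t)(1+x)/(σ+(1-σ)t+x) for x > 0, t ∈ [0,1], σ > 0. Then for x ≥ X0 > 0 and 0 ≤ t ≤ t0 ≤ 1, |F(x,t,σ) - σ| ≤ |1-σ|·t0·max(1,σ) + max(1,σ)²/X0. In particular, with X0 = (2e^{-v}) / (2ε^{1/4}) appropriately large and t0 = e^{v}ε^{1/4}/4, one obtains |F(x,t,σ) - σ| ≤ K ε^{1/4} for a constant K depending only on σ and v. -/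
/-!
With `a = σ + (1 - σ) t`, a convex combination of `σ` and `1`, one has
`F - σ = (1 - σ) (t x + a) / (a + x) ≤ (1 - σ) (t + a / x)` in absolute value, and
`0 < a ≤ max 1 σ`, `|1 - σ| ≤ max 1 σ`. Choosing `X0 = e^{-v} ε^{-1/4}` and `t0 = t`
turns both terms into multiples of `ε^{1/4}`.
-/

noncomputable def F (x t σ : ℝ) : ℝ :=
  (σ + (1 - σ) * t) * (1 + x) / (σ + (1 - σ) * t + x)

lemma F_sub_self {x t σ : ℝ} (h : σ + (1 - σ) * t + x ≠ 0) :
    F x t σ - σ = (1 - σ) * (t * x + (σ + (1 - σ) * t)) / (σ + (1 - σ) * t + x) := by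
  rw [F, div_sub' h, div_eq_div_iff h h]
  ring

lemma add_one_sub_mul_mem_Ioc {σ t : ℝ} (hσ : 0 < σ) (ht₀ : 0 ≤ t) (ht₁ : t ≤ 1) :
    σ + (1 - σ) * t ∈ Set.Ioc 0 (max 1 σ) := by
  have hcombo : σ + (1 - σ) * t = (1 - t) • σ + t • (1 : ℝ) := by
    simp only [smul_eq_mul]; ring
  have hsum : 1 - t + t = 1 := by ring
  rw [hcombo, max_comm]
  exact ⟨(lt_min hσ one_pos).trans_le (Convex.min_le_combo σ 1 (sub_nonneg.2 ht₁) ht₀ hsum),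
    Convex.combo_le_max σ 1 (sub_nonneg.2 ht₁) ht₀ hsum⟩

lemma div_add_le_add_div {t a x : ℝ} (ht : 0 ≤ t) (ha : 0 ≤ a) (hx : 0 < x) :
    (t * x + a) / (a + x) ≤ t + a / x := by
  have hexpand : (t + a / x) * (a + x) = t * x + a + (t * a + a ^ 2 / x) := by
    field_simp; ring
  rw [div_le_iff₀ (by positivity), hexpand]
  have : 0 ≤ t * a + a ^ 2 / x := by positivity
  linarith

theorem abs_F_sub_le {σ X0 t0 x t : ℝ} (hσ : 0 < σ) (hX0 : 0 < X0) (hx : X0 ≤ x)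
    (ht : 0 ≤ t) (htt0 : t ≤ t0) (ht0 : t0 ≤ 1) :
    |F x t σ - σ| ≤ |1 - σ| * t0 * max 1 σ + (max 1 σ) ^ 2 / X0 := by
  set M := max 1 σ
  set a := σ + (1 - σ) * t
  obtain ⟨ha, haM⟩ := add_one_sub_mul_mem_Ioc hσ ht (htt0.trans ht0)
  have hxpos : 0 < x := hX0.trans_le hx
  have hσM : |1 - σ| ≤ M :=
    abs_sub_le_of_nonneg_of_le zero_le_one (le_max_left 1 σ) hσ.le (le_max_right 1 σ)
  calc |F x t σ - σ| = |1 - σ| * ((t * x + a) / (a + x)) := by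
        rw [F_sub_self (by positivity), abs_div, abs_mul, abs_of_pos (by positivity : 0 < a + x),
          abs_of_nonneg (by positivity : 0 ≤ t * x + a), mul_div_assoc]
    _ ≤ |1 - σ| * (t + a / x) := by gcongr; exact div_add_le_add_div ht ha.le hxpos
    _ = |1 - σ| * t + |1 - σ| * a / x := by ring
    _ ≤ |1 - σ| * t0 * M + M ^ 2 / X0 := by
        gcongr ?_ + ?_
        · calc |1 - σ| * t ≤ |1 - σ| * t0 := by gcongr
            _ ≤ |1 - σ| * t0 * M := le_mul_of_one_le_right
              (mul_nonneg (abs_nonneg _) (ht.trans htt0)) (le_max_left 1 σ)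
        · rw [sq]; gcongr

theorem F_estimate (σ : ℝ) (hσ : 0 < σ) :
    (∀ X0 t0 x t : ℝ, 0 < X0 → X0 ≤ x → 0 ≤ t → t ≤ t0 → t0 ≤ 1 →
      |F x t σ - σ| ≤ |1 - σ| * t0 * max 1 σ + (max 1 σ) ^ 2 / X0) ∧
    (∀ v : ℝ, 0 ≤ v → ∃ K > 0, ∀ ε ∈ Set.Ioo (0 : ℝ) 1, ∀ x t : ℝ,
      Real.exp (-v) / ε ^ ((1 : ℝ)/4) ≤ x → 0 ≤ t →
      t ≤ Real.exp v * ε ^ ((1 : ℝ)/4) / 4 → t ≤ 1 →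
      |F x t σ - σ| ≤ K * ε ^ ((1 : ℝ)/4)) := by
  refine ⟨fun X0 t0 x t hX0 hx ht htt0 ht0 => abs_F_sub_le hσ hX0 hx ht htt0 ht0, ?_⟩
  intro v _
  set M := max 1 σ
  refine ⟨(|1 - σ| * M / 4 + M ^ 2) * Real.exp v, by positivity, ?_⟩
  rintro ε ⟨hε, -⟩ x t hx ht htv ht1
  set e := ε ^ ((1 : ℝ)/4)
  have he : 0 < e := Real.rpow_pos_of_pos hε _
  have hX0 : M ^ 2 / (Real.exp (-v) / e) = M ^ 2 * Real.exp v * e := by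
    rw [Real.exp_neg]; field_simp
  calc |F x t σ - σ| ≤ |1 - σ| * t * M + M ^ 2 / (Real.exp (-v) / e) :=
        abs_F_sub_le hσ (by positivity) hx ht le_rfl ht1
    _ ≤ |1 - σ| * (Real.exp v * e / 4) * M + M ^ 2 * Real.exp v * e := by
        rw [hX0]; gcongr
    _ = (|1 - σ| * M / 4 + M ^ 2) * Real.exp v * e := by ring
end

section
/- Let f : ℝ → ℝ be strictly increasing, with a single break point at b, one-sided derivatives Df₋(b), Df₊(b) > 0, and C² on each side of b with bounded second derivative. For z1 < b ≤ z2 < z3, writing σ = Df₋(b)/Df₊(b), ζ = (z2-b)/(z2-z1), ξ = (z3-z2)/(z2-z1), one has (f(z2)-f(z1))/(f(z3)-f(z1)) · (z3-z1)/(z2-z1) = ([σ+(1-σ)ζ](1+ξ))/(σ+(1-σ)ζ+ξ) + O(z3-z1), where the implied constant depends only on the bounds for Df, D²f and on σ. -/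
/-!
Bounded `f''` makes `f'` Lipschitz on each side of `b`, so the one-sided derivatives are the
one-sided limits of `f'`, and the mean value theorem gives, for `x ≤ b ≤ y`,
`f y - f x = dm (b - x) + dp (y - b) + O((y - x)²)`. Dividing by `dp`, the model ratio is exactly
`A (z3 - z1) / (B (z2 - z1))` with `A`, `B` these linear models of `f z2 - f z1` and
`f z3 - f z1`. Since `f z3 - f z1` and `B` are `≍ z3 - z1` while `A ≲ z2 - z1`, replacing
`A` and `B` by the true increments changes the ratio by `O(z3 - z1)`.
-/

open Set Filter Topology

section OneSidedTaylor

variable {f f' f'' : ℝ → ℝ} {b d M : ℝ}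

lemma continuousOn_Icc_of_hasDerivWithinAt_Ici (hd : HasDerivWithinAt f d (Ici b) b)
    (hf : ∀ x > b, HasDerivAt f (f' x) x) (u : ℝ) : ContinuousOn f (Icc b u) := by
  intro t ht
  rcases ht.1.eq_or_lt with rfl | hbt
  · exact hd.continuousWithinAt.mono fun s hs => hs.1
  · exact (hf t hbt).continuousAt.continuousWithinAt

lemma abs_deriv_sub_le_of_hasDerivWithinAt_Ici (hd : HasDerivWithinAt f d (Ici b) b)
    (hf : ∀ x > b, HasDerivAt f (f' x) x) (hf' : ∀ x > b, HasDerivAt f' (f'' x) x)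
    (hM : ∀ x > b, |f'' x| ≤ M) {t : ℝ} (ht : b < t) : |f' t - d| ≤ M * (t - b) := by
  have hM₀ : 0 ≤ M := (abs_nonneg _).trans (hM t ht)
  have hlip : ∀ s > b, |f' t - f' s| ≤ M * |t - s| := fun s hs =>
    (convex_Ioi b).norm_image_sub_le_of_norm_hasDerivWithin_le
      (fun x hx => (hf' x hx).hasDerivWithinAt) hM hs ht
  have hslope : Tendsto (slope f b) (𝓝[>] b) (𝓝 d) :=
    (hasDerivWithinAt_iff_tendsto_slope' (lt_irrefl b)).1 hd.Ioi_of_Ici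
  -- `d` is a limit of slopes `f' ξ` with `b < ξ < t`, each within `M * (t - b)` of `f' t`.
  refine le_of_tendsto ((hslope.const_sub (f' t)).abs) ?_
  filter_upwards [Ioo_mem_nhdsGT ht] with u hu
  obtain ⟨ξ, hξ, hξ_eq⟩ := exists_hasDerivAt_eq_slope f f' hu.1
    (continuousOn_Icc_of_hasDerivWithinAt_Ici hd hf u) fun x hx => hf x hx.1
  rw [slope_def_field, ← hξ_eq]
  calc |f' t - f' ξ| ≤ M * |t - ξ| := hlip ξ hξ.1
    _ ≤ M * (t - b) := by
      gcongr
      rw [abs_of_pos (by linarith [hξ.2, hu.2])]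
      linarith [hξ.1]

lemma abs_sub_sub_mul_le_sq_of_hasDerivWithinAt_Ici (hd : HasDerivWithinAt f d (Ici b) b)
    (hf : ∀ x > b, HasDerivAt f (f' x) x) (hf' : ∀ x > b, HasDerivAt f' (f'' x) x)
    (hM : ∀ x > b, |f'' x| ≤ M) {x : ℝ} (hx : b ≤ x) :
    |f x - f b - d * (x - b)| ≤ M * (x - b) ^ 2 := by
  rcases hx.eq_or_lt with rfl | hbx
  · simp
  obtain ⟨ξ, hξ, hξ_eq⟩ := exists_hasDerivAt_eq_slope f f' hbx
    (continuousOn_Icc_of_hasDerivWithinAt_Ici hd hf x) fun t ht => hf t ht.1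
  have hxb : 0 < x - b := sub_pos.2 hbx
  have hsplit : f x - f b - d * (x - b) = (f' ξ - d) * (x - b) := by
    rw [hξ_eq]; field_simp
  rw [hsplit, abs_mul, abs_of_pos hxb, sq, ← mul_assoc]
  gcongr
  calc |f' ξ - d| ≤ M * (ξ - b) := abs_deriv_sub_le_of_hasDerivWithinAt_Ici hd hf hf' hM hξ.1
    _ ≤ M * (x - b) :=
      mul_le_mul_of_nonneg_left (by linarith [hξ.2]) ((abs_nonneg _).trans (hM ξ hξ.1))

lemma abs_sub_sub_mul_le_sq_of_hasDerivWithinAt_Iic (hd : HasDerivWithinAt f d (Iic b) b)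
    (hf : ∀ x < b, HasDerivAt f (f' x) x) (hf' : ∀ x < b, HasDerivAt f' (f'' x) x)
    (hM : ∀ x < b, |f'' x| ≤ M) {x : ℝ} (hx : x ≤ b) :
    |f b - f x - d * (b - x)| ≤ M * (b - x) ^ 2 := by
  -- the reflection `y ↦ -f (-y)` turns the left side of `b` into the right side of `-b`
  have hd' : HasDerivWithinAt (fun y => -f (-y)) d (Ici (-b)) (-b) := by
    have h := (hd.comp_of_eq (-b) (hasDerivWithinAt_neg (-b) (Ici (-b)))
      (fun y (hy : -b ≤ y) => show -y ≤ b from neg_le.2 hy) (neg_neg b).symm).fun_neg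
    simpa [Function.comp_def] using h
  have hg : ∀ y > -b, HasDerivAt (fun y => -f (-y)) (f' (-y)) y := fun y hy => by
    have h := ((hf (-y) (neg_lt.2 hy)).comp y (hasDerivAt_neg y)).fun_neg
    simpa [Function.comp_def] using h
  have hg' : ∀ y > -b, HasDerivAt (fun y => f' (-y)) (-f'' (-y)) y := fun y hy => by
    have h := (hf' (-y) (neg_lt.2 hy)).comp y (hasDerivAt_neg y)
    simpa [Function.comp_def] using h
  have h := abs_sub_sub_mul_le_sq_of_hasDerivWithinAt_Ici hd' hg hg'
    (fun y hy => by simpa using hM (-y) (neg_lt.2 hy)) (neg_le_neg hx)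
  simp only [neg_neg] at h
  convert h using 2 <;> ring

end OneSidedTaylor

lemma abs_sub_sub_le_sq_of_hasDerivWithinAt_Iic_Ici {f f' f'' : ℝ → ℝ} {b dm dp M : ℝ}
    (hleft : HasDerivWithinAt f dm (Iic b) b) (hright : HasDerivWithinAt f dp (Ici b) b)
    (hf : ∀ x ≠ b, HasDerivAt f (f' x) x) (hf' : ∀ x ≠ b, HasDerivAt f' (f'' x) x)
    (hM : ∀ x ≠ b, |f'' x| ≤ M) {x y : ℝ} (hx : x ≤ b) (hy : b ≤ y) :
    |f y - f x - (dm * (b - x) + dp * (y - b))| ≤ M * (y - x) ^ 2 := by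
  have hM₀ : 0 ≤ M := (abs_nonneg _).trans (hM (b + 1) (lt_add_one b).ne')
  have hL := abs_sub_sub_mul_le_sq_of_hasDerivWithinAt_Iic hleft (fun t ht => hf t ht.ne)
    (fun t ht => hf' t ht.ne) (fun t ht => hM t ht.ne) hx
  have hR := abs_sub_sub_mul_le_sq_of_hasDerivWithinAt_Ici hright (fun t ht => hf t ht.ne')
    (fun t ht => hf' t ht.ne') (fun t ht => hM t ht.ne') hy
  calc |f y - f x - (dm * (b - x) + dp * (y - b))|
      = |(f y - f b - dp * (y - b)) + (f b - f x - dm * (b - x))| := by ring_nf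
    _ ≤ M * (y - b) ^ 2 + M * (b - x) ^ 2 := (abs_add_le _ _).trans (add_le_add hR hL)
    _ ≤ M * (y - x) ^ 2 := by
      nlinarith [mul_nonneg hM₀ (mul_nonneg (sub_nonneg.2 hx) (sub_nonneg.2 hy))]

lemma mul_sub_le_sub_of_le_deriv_of_ne {f f' : ℝ → ℝ} {b c x y : ℝ} (hb : ContinuousAt f b)
    (hf : ∀ t ≠ b, HasDerivAt f (f' t) t) (hc : ∀ t ≠ b, c ≤ f' t) (hx : x ≤ b)
    (hy : b ≤ y) :
    c * (y - x) ≤ f y - f x := by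
  have hcont : Continuous f := continuous_iff_continuousAt.2 fun t => by
    rcases eq_or_ne t b with rfl | ht
    exacts [hb, (hf t ht).continuousAt]
  have hside : ∀ u v : ℝ, u ≤ v → b ∉ Ioo u v → c * (v - u) ≤ f v - f u := by
    intro u v huv hbuv
    have hne : ∀ t ∈ interior (Icc u v), t ≠ b := by
      rw [interior_Icc]
      exact fun t ht htb => hbuv (htb ▸ ht)
    exact (convex_Icc u v).mul_sub_le_image_sub_of_le_deriv hcont.continuousOn
      (fun t ht => (hf t (hne t ht)).differentiableAt.differentiableWithinAt)
      (fun t ht => (hf t (hne t ht)).deriv ▸ hc t (hne t ht))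
      u (left_mem_Icc.2 huv) v (right_mem_Icc.2 huv) huv
  linarith [hside x b hx fun h => h.2.false, hside b y hy fun h => h.1.false]

lemma jump_ratio_model_eq {b dm dp z1 z2 z3 : ℝ} (hdp : dp ≠ 0) (h12 : z2 - z1 ≠ 0)
    (hB : dm * (b - z1) + dp * (z3 - b) ≠ 0) :
    ((dm / dp + (1 - dm / dp) * ((z2 - b) / (z2 - z1))) * (1 + (z3 - z2) / (z2 - z1))) /
        (dm / dp + (1 - dm / dp) * ((z2 - b) / (z2 - z1)) + (z3 - z2) / (z2 - z1)) =
      (dm * (b - z1) + dp * (z2 - b)) / (dm * (b - z1) + dp * (z3 - b)) *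
        ((z3 - z1) / (z2 - z1)) := by
  have hden : dm / dp + (1 - dm / dp) * ((z2 - b) / (z2 - z1)) + (z3 - z2) / (z2 - z1) =
      (dm * (b - z1) + dp * (z3 - b)) / (dp * (z2 - z1)) := by
    field_simp; ring
  have hnum : dm / dp + (1 - dm / dp) * ((z2 - b) / (z2 - z1)) =
      (dm * (b - z1) + dp * (z2 - b)) / (dp * (z2 - z1)) := by
    field_simp; ring
  rw [hden, hnum]
  field_simp
  ring

lemma abs_div_mul_sub_div_mul_le {p q A B h H c m L E : ℝ} (hh : 0 < h) (hhH : h ≤ H)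
    (hc : 0 < c) (hq : c * H ≤ q) (hm : 0 < m) (hB : m * H ≤ B) (hA₀ : 0 ≤ A)
    (hA : A ≤ L * h)
    (hpA : |p - A| ≤ E * h ^ 2) (hqB : |q - B| ≤ E * H ^ 2) :
    |p / q * (H / h) - A / B * (H / h)| ≤ E * (1 + L / m) / c * H := by
  have hH : 0 < H := hh.trans_le hhH
  have hq₀ : 0 < q := (mul_pos hc hH).trans_le hq
  have hB₀ : 0 < B := (mul_pos hm hH).trans_le hB
  have hE : 0 ≤ E := nonneg_of_mul_nonneg_left ((abs_nonneg _).trans hpA) (by positivity)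
  have hsplit : p / q * (H / h) - A / B * (H / h) =
      (p - A) / q * (H / h) - A / B * (H / h) * ((q - B) / q) := by
    field_simp; ring
  calc |p / q * (H / h) - A / B * (H / h)|
      ≤ |(p - A) / q * (H / h)| + |A / B * (H / h) * ((q - B) / q)| := hsplit ▸ abs_sub _ _
    _ = |p - A| / q * (H / h) + A / B * (H / h) * (|q - B| / q) := by
        simp only [abs_mul, abs_div, abs_of_pos hq₀, abs_of_pos hB₀, abs_of_pos hH,
          abs_of_pos hh, abs_of_nonneg hA₀]
    _ ≤ E * h ^ 2 / (c * H) * (H / h) + L * h / (m * H) * (H / h) * (E * H ^ 2 / (c * H)) := by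
        have : 0 ≤ L * h := hA₀.trans hA
        gcongr
    _ = E * h / c + E * (L / m) / c * H := by
        field_simp
    _ ≤ E * (1 + L / m) / c * H := by
        have : E * h / c ≤ E * H / c := by gcongr
        rw [mul_add, add_div, add_mul, mul_one, div_mul_eq_mul_div E c H]
        linarith

theorem increment_ratio_asymptotics_at_break_point_general
    (f f' f'' : ℝ → ℝ) (b : ℝ)
    (c1 c2 M : ℝ) (hc1 : 0 < c1) (hM : 0 ≤ M)
    (hderiv : ∀ x ≠ b, HasDerivAt f (f' x) x)
    (hderiv2 : ∀ x ≠ b, HasDerivAt f' (f'' x) x)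
    (hbound1 : ∀ x ≠ b, c1 ≤ f' x ∧ f' x ≤ c2)
    (hbound2 : ∀ x ≠ b, |f'' x| ≤ M)
    (dm dp : ℝ) (hdm : 0 < dm) (hdp : 0 < dp)
    (hleft : HasDerivWithinAt f dm (Set.Iic b) b)
    (hright : HasDerivWithinAt f dp (Set.Ici b) b)
    (σ : ℝ) (hσ : σ = dm / dp) :
    ∃ K > 0, ∀ z1 z2 z3 : ℝ,
      z1 < b → b ≤ z2 → z2 < z3 →
      |(f z2 - f z1) / (f z3 - f z1) * ((z3 - z1) / (z2 - z1)) -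
          ((σ + (1 - σ) * ((z2 - b) / (z2 - z1))) * (1 + (z3 - z2) / (z2 - z1))) /
            (σ + (1 - σ) * ((z2 - b) / (z2 - z1)) + (z3 - z2) / (z2 - z1))|
        ≤ K * (z3 - z1) := by
  subst hσ
  have hcont : ContinuousAt f b :=
    continuousAt_iff_continuous_left_right.2
      ⟨hleft.continuousWithinAt, hright.continuousWithinAt⟩
  have hTaylor := fun x y (hx : x ≤ b) (hy : b ≤ y) =>
    abs_sub_sub_le_sq_of_hasDerivWithinAt_Iic_Ici hleft hright hderiv hderiv2 hbound2 hx hy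
  refine ⟨M * (1 + max dm dp / min dm dp) / c1 + 1, by positivity, fun z1 z2 z3 h1 h2 h3 => ?_⟩
  have hincr : c1 * (z3 - z1) ≤ f z3 - f z1 :=
    mul_sub_le_sub_of_le_deriv_of_ne hcont hderiv (fun t ht => (hbound1 t ht).1) h1.le (by linarith)
  have hA₀ : 0 ≤ dm * (b - z1) + dp * (z2 - b) := by nlinarith
  have hA : dm * (b - z1) + dp * (z2 - b) ≤ max dm dp * (z2 - z1) := by
    nlinarith [le_max_left dm dp, le_max_right dm dp]
  have hB : min dm dp * (z3 - z1) ≤ dm * (b - z1) + dp * (z3 - b) := by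
    nlinarith [min_le_left dm dp, min_le_right dm dp]
  rw [jump_ratio_model_eq hdp.ne' (by linarith) (by nlinarith)]
  calc _ ≤ M * (1 + max dm dp / min dm dp) / c1 * (z3 - z1) :=
        abs_div_mul_sub_div_mul_le (by linarith) (by linarith) hc1 hincr (lt_min hdm hdp) hB
          hA₀ hA (hTaylor z1 z2 h1.le h2) (hTaylor z1 z3 h1.le (by linarith))
    _ ≤ _ := mul_le_mul_of_nonneg_right (le_add_of_nonneg_right zero_le_one) (by linarith)

theorem increment_ratio_asymptotics_at_break_point
    (f f' f'' : ℝ → ℝ) (b : ℝ)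
    (hmono : StrictMono f)
    (c1 c2 M : ℝ) (hc1 : 0 < c1) (hc12 : c1 ≤ c2) (hM : 0 ≤ M)
    (hderiv : ∀ x ≠ b, HasDerivAt f (f' x) x)
    (hderiv2 : ∀ x ≠ b, HasDerivAt f' (f'' x) x)
    (hcont2 : ContinuousOn f'' {x : ℝ | x ≠ b})
    (hbound1 : ∀ x ≠ b, c1 ≤ f' x ∧ f' x ≤ c2)
    (hbound2 : ∀ x ≠ b, |f'' x| ≤ M)
    (dm dp : ℝ) (hdm : 0 < dm) (hdp : 0 < dp)
    (hleft : HasDerivWithinAt f dm (Set.Iic b) b)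
    (hright : HasDerivWithinAt f dp (Set.Ici b) b)
    (σ : ℝ) (hσ : σ = dm / dp) :
    ∃ K > 0, ∀ z1 z2 z3 : ℝ,
      z1 < b → b ≤ z2 → z2 < z3 →
      |(f z2 - f z1) / (f z3 - f z1) * ((z3 - z1) / (z2 - z1)) -
          ((σ + (1 - σ) * ((z2 - b) / (z2 - z1))) * (1 + (z3 - z2) / (z2 - z1))) /
            (σ + (1 - σ) * ((z2 - b) / (z2 - z1)) + (z3 - z2) / (z2 - z1))|
        ≤ K * (z3 - z1) :=
  increment_ratio_asymptotics_at_break_point_general f f' f'' b c1 c2 M hc1 hM hderiv hderiv2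
    hbound1 hbound2 dm dp hdm hdp hleft hright σ hσ
end
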